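/- Let F be holomorphic on Δ⁺ with a continuous extension to Δ⁺ ∪ γ, suppose there exists C > 0 such that |Im F(t)| ≤ C·|Re F(t)| for every t ∈ γ, and suppose F is not identically zero on Δ⁺. Then the set {p ∈ Δ⁺ : Re F(p) ≠ 0} is an open dense subset of Δ⁺. -/

import Mathlib

/-- The open upper half disc `Δ⁺ = {ζ ∈ ℂ : |ζ| < 1, Im ζ > 0}`. -/
def upperHalfDisc : Set ℂ := {z : ℂ | ‖z‖ < 1 ∧ 0 < z.im}

/-- The interval `γ = (-1,1)` viewed as a subset of the real axis in `ℂ`. -/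
def realSegment : Set ℂ := {z : ℂ | z.im = 0 ∧ -1 < z.re ∧ z.re < 1}

/-!
If `Re F` vanished on a nonempty open subset of `Δ⁺`, then `F` would map that set into the
imaginary axis, which contains no nonempty open set; by the open mapping theorem `F` is then a constant
`w` with `Re w = 0`. By continuity `F 0 = w`, and the cone condition at `0 ∈ γ` forces `Im w = 0`,
so `F ≡ 0`.
-/

open Complex Set Filter Topology

theorem AnalyticOnNhd.exists_eq_const_of_re_eq_const_on {f : ℂ → ℂ} {U s : Set ℂ} {c₀ : ℝ}
    (hf : AnalyticOnNhd ℂ f U) (hU : IsPreconnected U) (hsU : s ⊆ U) (hs : IsOpen s)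
    (hs_ne : s.Nonempty) (hre : ∀ z ∈ s, (f z).re = c₀) : ∃ w, ∀ z ∈ U, f z = w := by
  refine (hf.is_constant_or_isOpen hU).resolve_right fun hopen => ?_
  have himage : re '' (f '' s) = {c₀} := by
    rw [image_image]
    exact (hs_ne.image _).subset_singleton_iff.mp (image_subset_iff.mpr hre)
  exact not_isOpen_singleton c₀ (himage ▸ isOpenMap_re _ (hopen s hsU hs))

lemma upperHalfDisc_eq_ball_inter : upperHalfDisc = Metric.ball (0 : ℂ) 1 ∩ {z | 0 < z.im} := by
  ext z
  simp [upperHalfDisc]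

lemma isOpen_upperHalfDisc : IsOpen upperHalfDisc := by
  rw [upperHalfDisc_eq_ball_inter]
  exact Metric.isOpen_ball.inter (isOpen_lt continuous_const continuous_im)

lemma isPreconnected_upperHalfDisc : IsPreconnected upperHalfDisc := by
  rw [upperHalfDisc_eq_ball_inter]
  exact ((convex_ball (0 : ℂ) 1).inter (convex_halfSpace_im_gt 0)).isPreconnected

lemma zero_mem_realSegment : (0 : ℂ) ∈ realSegment := by
  norm_num [realSegment]

lemma zero_mem_closure_upperHalfDisc : (0 : ℂ) ∈ closure upperHalfDisc := by
  have htendsto : Tendsto (fun t : ℝ => (t : ℂ) * I) (𝓝[>] 0) (𝓝 0) :=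
    ((continuous_ofReal.mul continuous_const).tendsto' 0 0 (by simp)).mono_left
      nhdsWithin_le_nhds
  refine mem_closure_of_tendsto htendsto ?_
  filter_upwards [Ioo_mem_nhdsGT one_pos] with t ⟨ht0, ht1⟩
  simp [upperHalfDisc, abs_of_pos ht0, ht0, ht1]

theorem re_nonzero_open_dense_in_disc_general
    (F : ℂ → ℂ)
    (hF_hol : DifferentiableOn ℂ F upperHalfDisc)
    (hF_cont : ContinuousOn F (upperHalfDisc ∪ realSegment))
    (C : ℝ)
    (hcone : ∀ t ∈ realSegment, |(F t).im| ≤ C * |(F t).re|)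
    (hF_ne : ¬ (∀ z ∈ upperHalfDisc, F z = 0)) :
    IsOpen {p ∈ upperHalfDisc | (F p).re ≠ 0} ∧
    upperHalfDisc ⊆ closure {p ∈ upperHalfDisc | (F p).re ≠ 0} := by
  refine ⟨(continuous_re.comp_continuousOn hF_hol.continuousOn).isOpen_inter_preimage
    isOpen_upperHalfDisc isOpen_compl_singleton, fun p hp => mem_closure_iff.mpr ?_⟩
  intro V hV hpV
  by_contra hempty
  have hre : ∀ z ∈ V ∩ upperHalfDisc, (F z).re = 0 :=
    fun z hz => by_contra fun h => hempty ⟨z, hz.1, hz.2, h⟩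
  obtain ⟨w, hw⟩ := (hF_hol.analyticOnNhd isOpen_upperHalfDisc).exists_eq_const_of_re_eq_const_on
    isPreconnected_upperHalfDisc inter_subset_right (hV.inter isOpen_upperHalfDisc) ⟨p, hpV, hp⟩ hre
  have hF0 : F 0 = w := by
    have hcont0 := (hF_cont 0 (Or.inr zero_mem_realSegment)).mono subset_union_left
    simpa using hcont0.mem_closure zero_mem_closure_upperHalfDisc (t := {w}) hw
  have hw_re : w.re = 0 := hw p hp ▸ hre p ⟨hpV, hp⟩
  have hw_im : w.im = 0 := by simpa [hF0, hw_re] using hcone 0 zero_mem_realSegment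
  exact hF_ne fun z hz => (hw z hz).trans (Complex.ext hw_re hw_im)

/-- **Observation 2.5, first part.**  If `F` is holomorphic on `Δ⁺`, continuous on
`Δ⁺ ∪ γ`, maps `γ` into a cone `{|Im z| ≤ C|Re z|}`, and is not identically zero on `Δ⁺`,
then `{p ∈ Δ⁺ : Re F(p) ≠ 0}` is an open dense subset of `Δ⁺`. -/
theorem re_nonzero_open_dense_in_disc
    (F : ℂ → ℂ)
    (hF_hol : DifferentiableOn ℂ F upperHalfDisc)
    (hF_cont : ContinuousOn F (upperHalfDisc ∪ realSegment))
    (C : ℝ) (hC : 0 < C)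
    (hcone : ∀ t ∈ realSegment, |(F t).im| ≤ C * |(F t).re|)
    (hF_ne : ¬ (∀ z ∈ upperHalfDisc, F z = 0)) :
    IsOpen {p ∈ upperHalfDisc | (F p).re ≠ 0} ∧
    upperHalfDisc ⊆ closure {p ∈ upperHalfDisc | (F p).re ≠ 0} :=
  re_nonzero_open_dense_in_disc_general F hF_hol hF_cont C hcone hF_ne
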